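/- Let n ≥ 2 and let x, x' ∈ {0,1}^n satisfy wt(x) ≡ wt(x') (mod 4). Suppose d_1, e_1, d_2, e_2 ∈ {1,…,n} with d_1 ≠ e_1 and d_2 ≠ e_2 such that E(x, d_1, e_1) = E(x', d_2, e_2). Then wt(x) = wt(x'), x_{d_1} = x'_{d_2}, and x_{e_1} = x'_{e_2}. -/

import Mathlib

/-! Deleting a symbol `b` lowers the weight by `b` and flipping a symbol `c` raises it by
`1 - 2c`, so `wt E(x,d,e) = wt x + 1 - x_d - 2 x_e`. Hence equal outputs give
`wt x - wt x' = (x_d - x'_d) + 2 (x_e - x'_e)`, an integer in `[-3, 3]`; divisible by 4, it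
vanishes, and `a + 2b = 0` with `a, b ∈ {-1, 0, 1}` forces `a = b = 0`. -/

/-- The bit of `x` at 1-based position `p` (junk value `0` out of range). -/
def getBit {n : ℕ} (x : Fin n → Fin 2) (p : ℕ) : Fin 2 :=
  if h : p - 1 < n then x ⟨p - 1, h⟩ else 0

/-- Hamming weight of a binary sequence. -/
def wt {n : ℕ} (x : Fin n → Fin 2) : ℕ := ∑ i, (x i : ℕ)

/-- The `j`-th order VT syndrome `f_j(x) = Σ_{i=1}^n (Σ_{ℓ=1}^i ℓ^{j-1}) x_i`. -/
def vtSyn {n : ℕ} (j : ℕ) (x : Fin n → Fin 2) : ℕ :=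
  ∑ i : Fin n, (∑ l ∈ Finset.Icc 1 ((i : ℕ) + 1), l ^ (j - 1)) * (x i : ℕ)

/-- Substitute the symbol at 1-based position `e` of `x` with its complement. -/
def substAt {n : ℕ} (x : Fin n → Fin 2) (e : ℕ) : Fin n → Fin 2 :=
  fun i => if (i : ℕ) + 1 = e then 1 - x i else x i

/-- Delete the symbol at 1-based position `d` of `x`. -/
def delAt {n : ℕ} (x : Fin n → Fin 2) (d : ℕ) : Fin (n - 1) → Fin 2 :=
  fun i => if (i : ℕ) + 1 < d then getBit x ((i : ℕ) + 1) else getBit x ((i : ℕ) + 2)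

/-- `E(x,d,e)`: delete the symbol at position `d` and substitute the symbol at
position `e` of `x` (positions are 1-based, taken in the original `x`). -/
def delSub {n : ℕ} (x : Fin n → Fin 2) (d e : ℕ) : Fin (n - 1) → Fin 2 :=
  delAt (substAt x e) d

/-- The single-deletion single-substitution error ball `B_{1,1}(x)`. -/
def ball {n : ℕ} (x : Fin n → Fin 2) : Set (Fin (n - 1) → Fin 2) :=
  {y | (∃ d ∈ Finset.Icc 1 n, y = delAt x d) ∨
       ∃ d ∈ Finset.Icc 1 n, ∃ e ∈ Finset.Icc 1 n, d ≠ e ∧ y = delSub x d e}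

/-- The code `C_n(c0,c1,c2)`. -/
def codeC (n : ℕ) (c0 c1 c2 : ℕ) : Finset (Fin n → Fin 2) :=
  Finset.univ.filter fun x =>
    x ≠ (fun _ => 0) ∧ x ≠ (fun _ => 1) ∧
    wt x % 4 = c0 ∧ vtSyn 1 x % (2 * n) = c1 ∧ vtSyn 2 x % (2 * n ^ 2) = c2

/-- `u_i = Σ_{ℓ=i}^n x_ℓ − Σ_{ℓ=i}^n x'_ℓ` (1-based positions, value in `ℤ`). -/
def uSeq {n : ℕ} (x x' : Fin n → Fin 2) (i : ℕ) : ℤ :=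
  (∑ l ∈ Finset.Icc i n, ((getBit x l : ℕ) : ℤ)) -
    ∑ l ∈ Finset.Icc i n, ((getBit x' l : ℕ) : ℤ)

lemma getBit_succ {n : ℕ} (x : Fin n → Fin 2) (i : Fin n) : getBit x (i + 1) = x i := by
  simp [getBit]

lemma delAt_succ {m : ℕ} (x : Fin (m + 1) → Fin 2) (d : Fin (m + 1)) :
    delAt x (d + 1) = fun i : Fin m => x (d.succAbove i) := by
  funext i
  rcases lt_or_ge (i : ℕ) d with hi | hi
  · rw [Fin.succAbove_of_castSucc_lt _ _ hi]
    simp [delAt, getBit, hi]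
    rfl
  · rw [Fin.succAbove_of_le_castSucc _ _ hi]
    simp [delAt, getBit, Nat.not_lt.mpr hi]
    rfl

lemma substAt_succ {n : ℕ} (x : Fin n → Fin 2) (e : Fin n) :
    substAt x (e + 1) = Function.update x e (1 - x e) := by
  funext i
  by_cases h : i = e
  · subst h; simp [substAt]
  · simp [substAt, h, Fin.val_inj]

lemma wt_succAbove {m : ℕ} (x : Fin (m + 1) → Fin 2) (d : Fin (m + 1)) :
    wt (fun i => x (d.succAbove i)) + x d = wt x := by
  simp only [wt, Fin.sum_univ_succAbove (fun i => (x i : ℕ)) d, add_comm]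

lemma wt_update_flip {n : ℕ} (x : Fin n → Fin 2) (e : Fin n) :
    wt (Function.update x e (1 - x e)) + 2 * x e = wt x + 1 := by
  have hrest : ∑ i ∈ Finset.univ.erase e, (Function.update x e (1 - x e) i : ℕ) =
      ∑ i ∈ Finset.univ.erase e, (x i : ℕ) :=
    Finset.sum_congr rfl fun i hi => by rw [Function.update_of_ne (Finset.ne_of_mem_erase hi)]
  rw [wt, wt, ← Finset.add_sum_erase _ _ (Finset.mem_univ e),
    ← Finset.add_sum_erase _ _ (Finset.mem_univ e), hrest, Function.update_self]
  generalize x e = b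
  fin_cases b <;> simp <;> omega

lemma exists_fin_succ_eq_of_mem_Icc {n d : ℕ} (hd : d ∈ Finset.Icc 1 n) :
    ∃ i : Fin n, (i : ℕ) + 1 = d := by
  rw [Finset.mem_Icc] at hd
  exact ⟨⟨d - 1, by omega⟩, by simp only; omega⟩

lemma wt_delSub {n : ℕ} (x : Fin n → Fin 2) {d e : ℕ} (hd : d ∈ Finset.Icc 1 n)
    (he : e ∈ Finset.Icc 1 n) (hde : d ≠ e) :
    wt (delSub x d e) + getBit x d + 2 * getBit x e = wt x + 1 := by
  obtain ⟨m, rfl⟩ : ∃ m, n = m + 1 := ⟨n - 1, by rw [Finset.mem_Icc] at hd; omega⟩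
  obtain ⟨i, rfl⟩ := exists_fin_succ_eq_of_mem_Icc hd
  obtain ⟨j, rfl⟩ := exists_fin_succ_eq_of_mem_Icc he
  have hij : i ≠ j := by rintro rfl; exact hde rfl
  have hdel := wt_succAbove (Function.update x j (1 - x j)) i
  rw [Function.update_of_ne hij] at hdel
  have hflip := wt_update_flip x j
  rw [delSub, substAt_succ, delAt_succ, getBit_succ, getBit_succ]
  omega

theorem stmt9_general (n : ℕ) (x x' : Fin n → Fin 2)
    (hwt : wt x ≡ wt x' [MOD 4])
    (d1 e1 d2 e2 : ℕ)
    (hd1 : d1 ∈ Finset.Icc 1 n) (he1 : e1 ∈ Finset.Icc 1 n)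
    (hd2 : d2 ∈ Finset.Icc 1 n) (he2 : e2 ∈ Finset.Icc 1 n)
    (h1 : d1 ≠ e1) (h2 : d2 ≠ e2)
    (hE : delSub x d1 e1 = delSub x' d2 e2) :
    wt x = wt x' ∧ getBit x d1 = getBit x' d2 ∧ getBit x e1 = getBit x' e2 := by
  have hx := wt_delSub x hd1 he1 h1
  have hx' := wt_delSub x' hd2 he2 h2
  rw [hE] at hx
  have hmod : wt x % 4 = wt x' % 4 := hwt
  have := (getBit x d1).is_le'
  have := (getBit x e1).is_le'
  have := (getBit x' d2).is_le'
  have := (getBit x' e2).is_le'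
  refine ⟨by omega, Fin.ext (by omega), Fin.ext (by omega)⟩

/-- Remark 3: if `wt(x) ≡ wt(x') (mod 4)` and
`E(x,d1,e1) = E(x',d2,e2)`, then `wt(x) = wt(x')`, `x_{d1} = x'_{d2}` and
`x_{e1} = x'_{e2}`. -/
theorem stmt9 (n : ℕ) (hn : 2 ≤ n) (x x' : Fin n → Fin 2)
    (hwt : wt x ≡ wt x' [MOD 4])
    (d1 e1 d2 e2 : ℕ)
    (hd1 : d1 ∈ Finset.Icc 1 n) (he1 : e1 ∈ Finset.Icc 1 n)
    (hd2 : d2 ∈ Finset.Icc 1 n) (he2 : e2 ∈ Finset.Icc 1 n)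
    (h1 : d1 ≠ e1) (h2 : d2 ≠ e2)
    (hE : delSub x d1 e1 = delSub x' d2 e2) :
    wt x = wt x' ∧ getBit x d1 = getBit x' d2 ∧ getBit x e1 = getBit x' e2 :=
  stmt9_general n x x' hwt d1 e1 d2 e2 hd1 he1 hd2 he2 h1 h2 hE
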